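/- Let β₁ > 0 be the unique positive real number satisfying ∑_{k=1}^∞ (k+1)² e^{−β₁√(k(k+2))} = 1, and define β = β₁ + (∑_{k=1}^∞ (k+1)² log(k+1) e^{−β₁√(k(k+2))}) / (∑_{k=1}^∞ (k+1)² √(k(k+2)) e^{−β₁√(k(k+2))}). Then 1.5957 < β < 1.5958. -/

import Mathlib

/-!
The partition sum `Z(c) = ∑ (k+1)² e^{-c E_k}` is decreasing in `c` and
`Z(1.22633) > 1 > Z(1.22634)`, so `β₁ ∈ [1.22633, 1.22634]`. The moments
`N(c) = ∑ (k+1)² log(k+1) e^{-c E_k}` and `D(c) = ∑ (k+1)² E_k e^{-c E_k}` are decreasing as well,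
so `β₁ + N(β₁)/D(β₁)` lies between `1.22633 + N(1.22634)/D(1.22633)` and
`1.22634 + N(1.22633)/D(1.22634)`. In each of these sums the terms `k ≤ 20` are enclosed by
rational numbers (Taylor polynomials of `exp` after range reduction, Newton's method for `E_k`,
the `artanh` series for `log`) and the rest by a geometric series; the resulting inequalities
between rationals are checked by exact computation.
-/

/-- The LQG area eigenvalue `E_k = √(k(k+2))` for spin `k/2`. -/
noncomputable def Ek (k : ℕ+) : ℝ :=
  Real.sqrt (((k : ℕ) : ℝ) * (((k : ℕ) : ℝ) + 2))

open Real Finset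

def expTaylor (n : ℕ) (t : ℚ) : ℚ := ∑ i ∈ range n, t ^ i / i.factorial

theorem expTaylor_pos {t : ℚ} (ht : 0 ≤ t) (n : ℕ) : 0 < expTaylor (n + 1) t := by
  rw [expTaylor, sum_range_succ']
  simp only [pow_zero, Nat.factorial_zero, Nat.cast_one, div_one]
  have : 0 ≤ ∑ i ∈ range n, t ^ (i + 1) / ((i + 1).factorial : ℚ) := by positivity
  linarith

theorem expTaylor_le_exp {t : ℚ} (ht : 0 ≤ t) (n : ℕ) : (expTaylor n t : ℝ) ≤ exp t := by
  simpa [expTaylor] using sum_le_exp_of_nonneg (Rat.cast_nonneg.2 ht) n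

def expTaylorRem (n : ℕ) (t : ℚ) : ℚ := t ^ n * (n + 1) / (n.factorial * n)

theorem exp_le_expTaylor_add {t : ℚ} (ht₀ : 0 ≤ t) (ht₁ : t ≤ 1) {n : ℕ} (hn : 0 < n) :
    exp t ≤ ((expTaylor n t + expTaylorRem n t : ℚ) : ℝ) := by
  simpa [expTaylor, expTaylorRem] using
    exp_bound' (Rat.cast_nonneg.2 ht₀) (by exact_mod_cast ht₁) hn

/-- Taylor polynomials of degree `7` after the range reduction `exp s = exp (s / 32) ^ 32`. -/
def expLower (s : ℚ) : ℚ := expTaylor 8 (s / 32) ^ 32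

def expUpper (s : ℚ) : ℚ := (expTaylor 8 (s / 32) + expTaylorRem 8 (s / 32)) ^ 32

theorem exp_eq_exp_div_pow (x : ℝ) (n : ℕ) (hn : n ≠ 0) : exp x = exp (x / n) ^ n := by
  rw [← exp_nat_mul, mul_div_cancel₀ _ (Nat.cast_ne_zero.2 hn)]

theorem expLower_le_exp {s : ℚ} (hs : 0 ≤ s) : (expLower s : ℝ) ≤ exp s := by
  have ht : 0 ≤ s / 32 := by positivity
  rw [exp_eq_exp_div_pow _ 32 (by norm_num), expLower, Rat.cast_pow]
  refine pow_le_pow_left₀ (by exact_mod_cast (expTaylor_pos ht 7).le) ?_ 32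
  simpa using expTaylor_le_exp ht 8

theorem exp_le_expUpper {s : ℚ} (hs₀ : 0 ≤ s) (hs : s ≤ 32) : exp s ≤ expUpper s := by
  rw [exp_eq_exp_div_pow _ 32 (by norm_num), expUpper, Rat.cast_pow]
  refine pow_le_pow_left₀ (exp_pos _).le ?_ 32
  simpa using
    exp_le_expTaylor_add (t := s / 32) (by positivity) (by linarith) (by norm_num : 0 < 8)

theorem expLower_pos {s : ℚ} (hs : 0 ≤ s) : 0 < expLower s :=
  pow_pos (expTaylor_pos (by positivity) 7) 32

theorem expUpper_pos {s : ℚ} (hs : 0 ≤ s) : 0 < expUpper s := by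
  have : 0 ≤ expTaylorRem 8 (s / 32) := by unfold expTaylorRem; positivity
  exact pow_pos (add_pos_of_pos_of_nonneg (expTaylor_pos (by positivity) 7) this) 32

theorem exp_neg_le_inv_expLower {x : ℝ} {s : ℚ} (hs : 0 ≤ s) (hsx : s ≤ x) :
    exp (-x) ≤ (expLower s : ℝ)⁻¹ := by
  rw [exp_neg]
  exact inv_anti₀ (Rat.cast_pos.2 (expLower_pos hs))
    ((expLower_le_exp hs).trans (exp_le_exp.2 hsx))

theorem inv_expUpper_le_exp_neg {x : ℝ} {s : ℚ} (hx : 0 ≤ x) (hxs : x ≤ s) (hs : s ≤ 32) :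
    (expUpper s : ℝ)⁻¹ ≤ exp (-x) := by
  rw [exp_neg]
  exact inv_anti₀ (exp_pos x)
    ((exp_le_exp.2 hxs).trans (exp_le_expUpper (by exact_mod_cast hx.trans hxs) hs))

theorem Ek_nonneg (k : ℕ+) : 0 ≤ Ek k := Real.sqrt_nonneg _

theorem Ek_le_succ (k : ℕ+) : Ek k ≤ (k : ℕ) + 1 :=
  Real.sqrt_le_iff.2 ⟨by positivity, by nlinarith⟩

theorem natCast_le_Ek (k : ℕ+) : ((k : ℕ) : ℝ) ≤ Ek k :=
  Real.le_sqrt_of_sq_le (by nlinarith)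

def newtonSqrt (x y : ℚ) : ℚ := (y + x / y) / 2

section Newton

variable {x y : ℚ}

theorem newtonSqrt_pos (hx : 0 ≤ x) (hy : 0 < y) : 0 < newtonSqrt x y := by
  unfold newtonSqrt; positivity

theorem le_newtonSqrt_sq (hy : y ≠ 0) : x ≤ newtonSqrt x y ^ 2 := by
  have key : newtonSqrt x y ^ 2 - x = ((y - x / y) / 2) ^ 2 := by
    unfold newtonSqrt; field_simp; ring
  nlinarith [sq_nonneg ((y - x / y) / 2)]

theorem newtonSqrt_le_self (hy : 0 < y) (h : x ≤ y ^ 2) : newtonSqrt x y ≤ y := by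
  have : x / y ≤ y := by rw [div_le_iff₀ hy]; nlinarith
  unfold newtonSqrt; linarith

theorem iterate_newtonSqrt_spec (hx : 0 ≤ x) (hy : 0 < y) (h : x ≤ y ^ 2) (n : ℕ) :
    let z := (newtonSqrt x)^[n] y
    0 < z ∧ x ≤ z ^ 2 ∧ z ≤ y := by
  refine Function.Iterate.rec (fun z => 0 < z ∧ x ≤ z ^ 2 ∧ z ≤ y) ⟨hy, h, le_rfl⟩ ?_ n
  rintro z ⟨hz, hxz, hzy⟩
  exact ⟨newtonSqrt_pos hx hz, le_newtonSqrt_sq hz.ne', (newtonSqrt_le_self hz hxz).trans hzy⟩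

end Newton

def areaUpper (k : ℕ) : ℚ := (newtonSqrt (k * (k + 2)))^[3] (k + 1)

def areaLower (k : ℕ) : ℚ := k * (k + 2) / areaUpper k

theorem areaUpper_spec (k : ℕ) :
    0 < areaUpper k ∧ (k * (k + 2) : ℚ) ≤ areaUpper k ^ 2 ∧ areaUpper k ≤ k + 1 :=
  iterate_newtonSqrt_spec (by positivity) (by positivity) (by nlinarith) 3

theorem Ek_le_areaUpper (k : ℕ+) : Ek k ≤ areaUpper k := by
  obtain ⟨hpos, hsq, -⟩ := areaUpper_spec k
  rw [Ek, sqrt_le_iff]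
  exact ⟨by exact_mod_cast hpos.le, by exact_mod_cast hsq⟩

theorem areaLower_le_Ek (k : ℕ+) : (areaLower k : ℝ) ≤ Ek k := by
  have hpos : (0 : ℝ) < areaUpper k := by exact_mod_cast (areaUpper_spec k).1
  have hsq : Ek k ^ 2 = (k : ℕ) * ((k : ℕ) + 2) := sq_sqrt (by positivity)
  rw [areaLower, Rat.cast_div, div_le_iff₀ hpos]
  push_cast
  nlinarith [Ek_le_areaUpper k, Ek_nonneg k]

/-- Partial sums of the series `log (1 + a⁻¹) = ∑ 2 / (2i + 1) · (2a + 1)^-(2i+1)`. -/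
def logSeries (n : ℕ) (a : ℚ) : ℚ :=
  ∑ i ∈ range n, 2 * (1 / (2 * i + 1)) * (1 / (2 * a + 1)) ^ (2 * i + 1)

def logSeriesRem (n : ℕ) (a : ℚ) : ℚ :=
  2 * (1 / (2 * n + 1)) * (1 / (2 * a + 1)) ^ (2 * n + 1) / (1 - (1 / (2 * a + 1)) ^ 2)

theorem logSeries_le_log {a : ℚ} (ha : 0 < a) (n : ℕ) :
    (logSeries n a : ℝ) ≤ log (1 + (a : ℝ)⁻¹) := by
  have h := hasSum_log_one_add_inv (Rat.cast_pos.2 ha)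
  simpa [logSeries] using sum_le_hasSum (range n) (fun i _ => by positivity) h

theorem log_le_logSeries_add {a : ℚ} (ha : 0 < a) (n : ℕ) :
    log (1 + (a : ℝ)⁻¹) ≤ (logSeries n a + logSeriesRem n a : ℚ) := by
  set x : ℝ := 1 / (2 * a + 1) with hx
  have ha' : (0 : ℝ) < a := Rat.cast_pos.2 ha
  have hx₀ : 0 ≤ x := by positivity
  have hx₁ : x ^ 2 < 1 := by
    rw [sq_lt_one_iff₀ hx₀, hx, div_lt_one (by positivity)]; linarith
  set C : ℝ := 2 * (1 / (2 * (n : ℝ) + 1)) * x ^ (2 * n + 1)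
  have h := hasSum_log_one_add_inv ha'
  have htail : ∀ i : ℕ, 2 * (1 / (2 * ((i + n : ℕ) : ℝ) + 1)) * x ^ (2 * (i + n) + 1) ≤
      C * (x ^ 2) ^ i := by
    intro i
    have hi : 1 / (2 * ((i + n : ℕ) : ℝ) + 1) ≤ 1 / (2 * (n : ℝ) + 1) :=
      one_div_le_one_div_of_le (by positivity)
        (by push_cast; linarith [(i.cast_nonneg : (0 : ℝ) ≤ i)])
    rw [show 2 * (i + n) + 1 = (2 * n + 1) + 2 * i by ring, pow_add, pow_mul]
    have hxi := mul_nonneg (pow_nonneg hx₀ (2 * n + 1)) (pow_nonneg (sq_nonneg x) i)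
    calc 2 * (1 / (2 * ((i + n : ℕ) : ℝ) + 1)) * (x ^ (2 * n + 1) * (x ^ 2) ^ i)
        ≤ 2 * (1 / (2 * (n : ℝ) + 1)) * (x ^ (2 * n + 1) * (x ^ 2) ^ i) := by gcongr
      _ = C * (x ^ 2) ^ i := by simp only [C]; ring
  have hhead :
      ∑ i ∈ range n, 2 * (1 / (2 * (i : ℝ) + 1)) * x ^ (2 * i + 1) = logSeries n a := by
    push_cast [logSeries]; rfl
  have hrem : ((logSeriesRem n a : ℚ) : ℝ) = C * (1 - x ^ 2)⁻¹ := by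
    push_cast [logSeriesRem]; ring
  rw [← h.tsum_eq, ← h.summable.sum_add_tsum_nat_add n, Rat.cast_add, ← hhead, hrem]
  gcongr
  exact hasSum_le htail ((summable_nat_add_iff n).2 h.summable).hasSum
    ((hasSum_geometric_of_lt_one (sq_nonneg x) hx₁).mul_left C)

theorem log_natCast_add_one_eq_sum (k : ℕ) :
    log (k + 1) = ∑ i ∈ range k, log (1 + ((i : ℝ) + 1)⁻¹) := by
  induction k with
  | zero => simp
  | succ k ih =>
    rw [sum_range_succ, ← ih, ← log_mul (by positivity) (by positivity)]
    congr 1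
    field_simp
    push_cast
    ring

def logSuccLower (k : ℕ) : ℚ := ∑ i ∈ range k, logSeries 6 (i + 1)

def logSuccUpper (k : ℕ) : ℚ := ∑ i ∈ range k, (logSeries 6 (i + 1) + logSeriesRem 6 (i + 1))

theorem logSuccLower_le_log (k : ℕ) : (logSuccLower k : ℝ) ≤ log (k + 1) := by
  rw [log_natCast_add_one_eq_sum, logSuccLower, Rat.cast_sum]
  gcongr with i
  simpa using logSeries_le_log (by positivity : (0 : ℚ) < i + 1) 6

theorem log_le_logSuccUpper (k : ℕ) : log (k + 1) ≤ logSuccUpper k := by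
  rw [log_natCast_add_one_eq_sum, logSuccUpper, Rat.cast_sum]
  gcongr with i
  simpa using log_le_logSeries_add (by positivity : (0 : ℚ) < i + 1) 6

/-- The ratio of consecutive terms is at most `(13/12)³ / e < 1/2`. -/
theorem cube_mul_exp_succ_le {c m : ℝ} (hc : 1 ≤ c) (hm : 11 ≤ m) :
    (m + 1 + 1) ^ 3 * exp (-c * (m + 1)) ≤ (m + 1) ^ 3 * exp (-c * m) / 2 := by
  have hec : exp (-c) ≤ 1 / 2.7 := by
    rw [exp_neg, ← one_div]
    exact one_div_le_one_div_of_le (by norm_num)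
      ((by linarith [exp_one_gt_d9] : (2.7 : ℝ) ≤ exp 1).trans (exp_le_exp.2 hc))
  have he : exp (-c * (m + 1)) ≤ exp (-c * m) / 2.7 := by
    rw [show -c * (m + 1) = -c * m + -c by ring, exp_add]
    calc exp (-c * m) * exp (-c) ≤ exp (-c * m) * (1 / 2.7) := by gcongr
      _ = exp (-c * m) / 2.7 := by ring
  have hpoly : (m + 1 + 1) ^ 3 / 2.7 ≤ (m + 1) ^ 3 / 2 := by
    rw [div_le_div_iff₀ (by norm_num) (by norm_num)]
    nlinarith [sq_nonneg (m - 11), mul_nonneg (sub_nonneg.2 hm) (sq_nonneg m)]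
  calc (m + 1 + 1) ^ 3 * exp (-c * (m + 1)) ≤ (m + 1 + 1) ^ 3 * (exp (-c * m) / 2.7) := by
        gcongr
    _ = (m + 1 + 1) ^ 3 / 2.7 * exp (-c * m) := by ring
    _ ≤ (m + 1) ^ 3 / 2 * exp (-c * m) := by gcongr
    _ = (m + 1) ^ 3 * exp (-c * m) / 2 := by ring

noncomputable def moment (w : ℕ+ → ℝ) (c : ℝ) : ℝ := ∑' k : ℕ+, w k * exp (-c * Ek k)

theorem tsum_pnat_eq_sum_add_tsum {F : ℕ+ → ℝ} (hF : Summable F) (K : ℕ) :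
    ∑' k, F k = ∑ k ∈ range K, F k.succPNat + ∑' n, F (n + K).succPNat := by
  have hF' : Summable (F ∘ Nat.succPNat) :=
    (Equiv.pnatEquivNat.symm.summable_iff).2 hF
  rw [← Equiv.pnatEquivNat.symm.tsum_eq F]
  exact (hF'.sum_add_tsum_nat_add K).symm

section Moment

variable {w : ℕ+ → ℝ} {c : ℝ}

theorem moment_term_le_geometric (hw₃ : ∀ k : ℕ+, w k ≤ (((k : ℕ) : ℝ) + 1) ^ 3) (hc : 1 ≤ c)
    {K : ℕ} (hK : 10 ≤ K) (n : ℕ) :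
    w (n + K).succPNat * exp (-c * Ek (n + K).succPNat) ≤
      ((K : ℝ) + 2) ^ 3 * exp (-c * (K + 1)) * (1 / 2) ^ n := by
  set g : ℝ → ℝ := fun m => (m + 1) ^ 3 * exp (-c * m)
  have hK' : (10 : ℝ) ≤ K := by exact_mod_cast hK
  have hstep : ∀ j : ℕ, g ((j + K : ℕ) + 1) ≤ g ((K : ℝ) + 1) * (1 / 2) ^ j := by
    intro j
    induction j with
    | zero => simp
    | succ j ih =>
      have h := cube_mul_exp_succ_le (m := (j + K : ℕ) + 1) hc
        (by push_cast; linarith [(j.cast_nonneg : (0 : ℝ) ≤ j)])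
      calc g ((j + 1 + K : ℕ) + 1) = g (((j + K : ℕ) + 1) + 1) := by push_cast; ring_nf
        _ ≤ g ((j + K : ℕ) + 1) / 2 := h
        _ ≤ g ((K : ℝ) + 1) * (1 / 2) ^ (j + 1) := by rw [pow_succ]; linarith
  have hk : (((n + K).succPNat : ℕ) : ℝ) = (n + K : ℕ) + 1 := by simp
  calc w (n + K).succPNat * exp (-c * Ek (n + K).succPNat)
      ≤ g ((n + K : ℕ) + 1) := by
        refine mul_le_mul ((hw₃ _).trans_eq (by rw [hk])) (exp_le_exp.2 ?_) (exp_pos _).le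
          (by positivity)
        nlinarith [natCast_le_Ek (n + K).succPNat]
    _ ≤ g ((K : ℝ) + 1) * (1 / 2) ^ n := hstep n
    _ = ((K : ℝ) + 2) ^ 3 * exp (-c * (K + 1)) * (1 / 2) ^ n := by simp only [g]; ring_nf

theorem summable_moment_tail (hw₀ : ∀ k, 0 ≤ w k) (hw₃ : ∀ k : ℕ+, w k ≤ (((k : ℕ) : ℝ) + 1) ^ 3)
    (hc : 1 ≤ c) {K : ℕ} (hK : 10 ≤ K) :
    Summable fun n : ℕ => w (n + K).succPNat * exp (-c * Ek (n + K).succPNat) :=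
  .of_nonneg_of_le (fun _ => mul_nonneg (hw₀ _) (exp_pos _).le)
    (moment_term_le_geometric hw₃ hc hK) (summable_geometric_two.mul_left _)

theorem summable_moment (hw₀ : ∀ k, 0 ≤ w k) (hw₃ : ∀ k : ℕ+, w k ≤ (((k : ℕ) : ℝ) + 1) ^ 3)
    (hc : 1 ≤ c) : Summable fun k => w k * exp (-c * Ek k) := by
  rw [← Equiv.pnatEquivNat.symm.summable_iff, ← summable_nat_add_iff 10]
  exact summable_moment_tail hw₀ hw₃ hc le_rfl

theorem moment_tail_le (hw₀ : ∀ k, 0 ≤ w k) (hw₃ : ∀ k : ℕ+, w k ≤ (((k : ℕ) : ℝ) + 1) ^ 3)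
    (hc : 1 ≤ c) {K : ℕ} (hK : 10 ≤ K) :
    ∑' n : ℕ, w (n + K).succPNat * exp (-c * Ek (n + K).succPNat) ≤
      2 * ((K : ℝ) + 2) ^ 3 * exp (-c * (K + 1)) := by
  calc _ ≤ ∑' n : ℕ, ((K : ℝ) + 2) ^ 3 * exp (-c * (K + 1)) * (1 / 2) ^ n :=
        (summable_moment_tail hw₀ hw₃ hc hK).tsum_le_tsum (moment_term_le_geometric hw₃ hc hK)
          (summable_geometric_two.mul_left _)
    _ = 2 * ((K : ℝ) + 2) ^ 3 * exp (-c * (K + 1)) := by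
        rw [tsum_mul_left, tsum_geometric_two]; ring

theorem moment_anti (hw₀ : ∀ k, 0 ≤ w k) (hs : Summable fun k => w k * exp (-c * Ek k))
    {d : ℝ} (hcd : c ≤ d) : moment w d ≤ moment w c := by
  have hle : ∀ k, w k * exp (-d * Ek k) ≤ w k * exp (-c * Ek k) := fun k =>
    mul_le_mul_of_nonneg_left (exp_le_exp.2 (by nlinarith [Ek_nonneg k])) (hw₀ k)
  exact (hs.of_nonneg_of_le (fun k => mul_nonneg (hw₀ k) (exp_pos _).le) hle).tsum_le_tsum hle hs

def momentLower (wL : ℕ → ℚ) (c : ℚ) (K : ℕ) : ℚ :=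
  ∑ k ∈ range K, wL (k + 1) / expUpper (c * areaUpper (k + 1))

/-- The last summand bounds the terms `k > K`, see `moment_tail_le`. -/
def momentUpper (wU : ℕ → ℚ) (c : ℚ) (K : ℕ) : ℚ :=
  ∑ k ∈ range K, wU (k + 1) / expLower (c * areaLower (k + 1)) +
    2 * (K + 2) ^ 3 / expLower (c * (K + 1))

theorem momentLower_le_moment (hw₀ : ∀ k, 0 ≤ w k)
    (hw₃ : ∀ k : ℕ+, w k ≤ (((k : ℕ) : ℝ) + 1) ^ 3) {wL : ℕ → ℚ}
    (hwL : ∀ k : ℕ+, (wL k : ℝ) ≤ w k)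
    {c : ℚ} (hc : 1 ≤ c) {K : ℕ} (hcK : c * (K + 1) ≤ 32) :
    (momentLower wL c K : ℝ) ≤ moment w c := by
  have hc' : (1 : ℝ) ≤ c := by exact_mod_cast hc
  rw [moment, tsum_pnat_eq_sum_add_tsum (summable_moment hw₀ hw₃ hc') K, momentLower,
    Rat.cast_sum]
  refine le_add_of_le_of_nonneg (sum_le_sum fun k hk => ?_)
    (tsum_nonneg fun _ => mul_nonneg (hw₀ _) (exp_pos _).le)
  have hE := Ek_le_areaUpper k.succPNat
  simp only [Nat.succPNat_coe] at hE
  have hcK' : c * areaUpper (k + 1) ≤ 32 := by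
    have := (areaUpper_spec (k + 1)).2.2
    have : (k : ℚ) + 1 ≤ K := by exact_mod_cast mem_range.1 hk
    push_cast at *
    nlinarith
  rw [Rat.cast_div, div_eq_mul_inv, neg_mul]
  refine mul_le_mul (by simpa using hwL k.succPNat) (inv_expUpper_le_exp_neg ?_ ?_ hcK')
    (inv_nonneg.2 (Rat.cast_nonneg.2
      (expUpper_pos (mul_nonneg (by linarith) (areaUpper_spec _).1.le)).le)) (hw₀ _)
  · exact mul_nonneg (by linarith) (Ek_nonneg _)
  · push_cast; gcongr

theorem moment_le_momentUpper (hw₀ : ∀ k, 0 ≤ w k)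
    (hw₃ : ∀ k : ℕ+, w k ≤ (((k : ℕ) : ℝ) + 1) ^ 3) {wU : ℕ → ℚ}
    (hwU : ∀ k : ℕ+, w k ≤ wU k)
    {c : ℚ} (hc : 1 ≤ c) {K : ℕ} (hK : 10 ≤ K) :
    moment w c ≤ momentUpper wU c K := by
  have hc' : (1 : ℝ) ≤ c := by exact_mod_cast hc
  rw [moment, tsum_pnat_eq_sum_add_tsum (summable_moment hw₀ hw₃ hc') K, momentUpper,
    Rat.cast_add, Rat.cast_sum]
  gcongr with k
  · have hE := areaLower_le_Ek k.succPNat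
    simp only [Nat.succPNat_coe] at hE
    have hA : 0 ≤ areaLower (k + 1) := by
      unfold areaLower; have := (areaUpper_spec (k + 1)).1; positivity
    rw [Rat.cast_div, div_eq_mul_inv, neg_mul]
    have hwk : w k.succPNat ≤ wU (k + 1) := by simpa using hwU k.succPNat
    refine mul_le_mul hwk (exp_neg_le_inv_expLower (by positivity) ?_) (exp_pos _).le
      ((hw₀ _).trans hwk)
    push_cast; gcongr
  · refine (moment_tail_le hw₀ hw₃ hc' hK).trans ?_
    have hcK : (0 : ℚ) ≤ c * (K + 1) := by positivity
    push_cast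
    rw [div_eq_mul_inv, neg_mul]
    gcongr
    exact_mod_cast exp_neg_le_inv_expLower hcK le_rfl

end Moment

noncomputable def sqWeight (k : ℕ+) : ℝ := (((k : ℕ) : ℝ) + 1) ^ 2

noncomputable def logWeight (k : ℕ+) : ℝ := (((k : ℕ) : ℝ) + 1) ^ 2 * log (((k : ℕ) : ℝ) + 1)

noncomputable def areaWeight (k : ℕ+) : ℝ := (((k : ℕ) : ℝ) + 1) ^ 2 * Ek k

theorem sq_mul_le_cube (k : ℕ+) {g : ℝ} (hg : g ≤ (k : ℕ) + 1) :
    (((k : ℕ) : ℝ) + 1) ^ 2 * g ≤ (((k : ℕ) : ℝ) + 1) ^ 3 := by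
  calc _ ≤ (((k : ℕ) : ℝ) + 1) ^ 2 * ((k : ℕ) + 1) := by gcongr
    _ = _ := by ring

theorem sqWeight_nonneg (k : ℕ+) : 0 ≤ sqWeight k := by unfold sqWeight; positivity

theorem sqWeight_le (k : ℕ+) : sqWeight k ≤ (((k : ℕ) : ℝ) + 1) ^ 3 := by
  simpa [sqWeight] using sq_mul_le_cube k (g := 1) (by simp)

theorem logWeight_nonneg (k : ℕ+) : 0 ≤ logWeight k := by
  unfold logWeight
  have : 0 ≤ log (((k : ℕ) : ℝ) + 1) := log_nonneg (by simp)
  positivity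

theorem logWeight_le (k : ℕ+) : logWeight k ≤ (((k : ℕ) : ℝ) + 1) ^ 3 :=
  sq_mul_le_cube k ((log_le_sub_one_of_pos (by positivity)).trans (by linarith))

theorem areaWeight_nonneg (k : ℕ+) : 0 ≤ areaWeight k := by
  unfold areaWeight
  have := Ek_nonneg k
  positivity

theorem areaWeight_le (k : ℕ+) : areaWeight k ≤ (((k : ℕ) : ℝ) + 1) ^ 3 :=
  sq_mul_le_cube k (Ek_le_succ k)

def sqWeightRat (k : ℕ) : ℚ := (k + 1) ^ 2

def logWeightLower (k : ℕ) : ℚ := (k + 1) ^ 2 * logSuccLower k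

def logWeightUpper (k : ℕ) : ℚ := (k + 1) ^ 2 * logSuccUpper k

def areaWeightLower (k : ℕ) : ℚ := (k + 1) ^ 2 * areaLower k

def areaWeightUpper (k : ℕ) : ℚ := (k + 1) ^ 2 * areaUpper k

theorem sqWeightRat_eq (k : ℕ+) : (sqWeightRat k : ℝ) = sqWeight k := by
  simp [sqWeightRat, sqWeight]

theorem logWeightLower_le (k : ℕ+) : (logWeightLower k : ℝ) ≤ logWeight k := by
  simpa [logWeightLower, logWeight] using
    mul_le_mul_of_nonneg_left (logSuccLower_le_log k)
      (by positivity : (0 : ℝ) ≤ ((k : ℕ) + 1) ^ 2)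

theorem logWeight_le_upper (k : ℕ+) : logWeight k ≤ logWeightUpper k := by
  simpa [logWeightUpper, logWeight] using
    mul_le_mul_of_nonneg_left (log_le_logSuccUpper k)
      (by positivity : (0 : ℝ) ≤ ((k : ℕ) + 1) ^ 2)

theorem areaWeightLower_le (k : ℕ+) : (areaWeightLower k : ℝ) ≤ areaWeight k := by
  simpa [areaWeightLower, areaWeight] using
    mul_le_mul_of_nonneg_left (areaLower_le_Ek k)
      (by positivity : (0 : ℝ) ≤ ((k : ℕ) + 1) ^ 2)

theorem areaWeight_le_upper (k : ℕ+) : areaWeight k ≤ areaWeightUpper k := by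
  simpa [areaWeightUpper, areaWeight] using
    mul_le_mul_of_nonneg_left (Ek_le_areaUpper k)
      (by positivity : (0 : ℝ) ≤ ((k : ℕ) + 1) ^ 2)

/-- Numerically `β₁ = 1.2263342…`. -/
def bracketLo : ℚ := 122633 / 100000

def bracketHi : ℚ := 122634 / 100000

theorem one_lt_momentLower_bracketLo : 1 < momentLower sqWeightRat bracketLo 20 := by
  decide +kernel

theorem momentUpper_bracketHi_lt_one : momentUpper sqWeightRat bracketHi 20 < 1 := by
  decide +kernel

theorem momentLower_area_pos : 0 < momentLower areaWeightLower bracketHi 20 := by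
  decide +kernel

def betaLower : ℚ :=
  bracketLo + momentLower logWeightLower bracketHi 20 / momentUpper areaWeightUpper bracketLo 20

def betaUpper : ℚ :=
  bracketHi + momentUpper logWeightUpper bracketLo 20 / momentLower areaWeightLower bracketHi 20

theorem lt_betaLower : 1.5957 < betaLower := by
  decide +kernel

theorem betaUpper_lt : betaUpper < 1.5958 := by
  decide +kernel

theorem bracket_of_moment_eq_one {β : ℝ} (h : moment sqWeight β = 1) :
    (bracketLo : ℝ) < β ∧ β < bracketHi := by
  have hs : Summable fun k => sqWeight k * exp (-β * Ek k) := by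
    by_contra hs
    rw [moment, tsum_eq_zero_of_not_summable hs] at h
    exact zero_ne_one h
  constructor
  · by_contra! hle
    have := momentLower_le_moment sqWeight_nonneg sqWeight_le (fun k => (sqWeightRat_eq k).le)
      (c := bracketLo) (K := 20) (by norm_num [bracketLo]) (by norm_num [bracketLo])
    have := moment_anti sqWeight_nonneg hs hle
    have : (1 : ℝ) < momentLower sqWeightRat bracketLo 20 := by
      exact_mod_cast one_lt_momentLower_bracketLo
    linarith
  · by_contra! hle
    have := moment_le_momentUpper sqWeight_nonneg sqWeight_le (fun k => (sqWeightRat_eq k).ge)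
      (c := bracketHi) (K := 20) (by norm_num [bracketHi]) (by norm_num)
    have := moment_anti sqWeight_nonneg (summable_moment sqWeight_nonneg sqWeight_le
      (by norm_num [bracketHi] : (1 : ℝ) ≤ bracketHi)) hle
    have : (momentUpper sqWeightRat bracketHi 20 : ℝ) < 1 := by
      exact_mod_cast momentUpper_bracketHi_lt_one
    linarith

theorem moment_mem_of_bracket {w : ℕ+ → ℝ} (hw₀ : ∀ k, 0 ≤ w k)
    (hw₃ : ∀ k : ℕ+, w k ≤ (((k : ℕ) : ℝ) + 1) ^ 3) {wL wU : ℕ → ℚ}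
    (hwL : ∀ k : ℕ+, (wL k : ℝ) ≤ w k) (hwU : ∀ k : ℕ+, w k ≤ wU k) {β : ℝ}
    (hlo : (bracketLo : ℝ) ≤ β) (hhi : β ≤ bracketHi) :
    (momentLower wL bracketHi 20 : ℝ) ≤ moment w β ∧ moment w β ≤ momentUpper wU bracketLo 20 :=
  have hlo₁ : (1 : ℝ) ≤ bracketLo := by norm_num [bracketLo]
  ⟨(momentLower_le_moment hw₀ hw₃ hwL (by norm_num [bracketHi]) (by norm_num [bracketHi])).trans
      (moment_anti hw₀ (summable_moment hw₀ hw₃ (hlo₁.trans hlo)) hhi),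
    (moment_anti hw₀ (summable_moment hw₀ hw₃ hlo₁) hlo).trans
      (moment_le_momentUpper hw₀ hw₃ hwU (by norm_num [bracketLo]) (by norm_num))⟩

theorem add_moment_div_mem_of_bracket {β : ℝ} (hlo : (bracketLo : ℝ) ≤ β)
    (hhi : β ≤ bracketHi) :
    (betaLower : ℝ) ≤ β + moment logWeight β / moment areaWeight β ∧
      β + moment logWeight β / moment areaWeight β ≤ betaUpper := by
  obtain ⟨hN₁, hN₂⟩ := moment_mem_of_bracket logWeight_nonneg logWeight_le logWeightLower_le
    logWeight_le_upper hlo hhi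
  obtain ⟨hD₁, hD₂⟩ := moment_mem_of_bracket areaWeight_nonneg areaWeight_le areaWeightLower_le
    areaWeight_le_upper hlo hhi
  have hN₀ : 0 ≤ moment logWeight β :=
    tsum_nonneg fun k => mul_nonneg (logWeight_nonneg k) (exp_pos _).le
  have hDL : (0 : ℝ) < momentLower areaWeightLower bracketHi 20 := by
    exact_mod_cast momentLower_area_pos
  push_cast [betaLower, betaUpper]
  exact ⟨add_le_add hlo (div_le_div₀ hN₀ hN₁ (hDL.trans_le hD₁) hD₂),
    add_le_add hhi (div_le_div₀ (hN₀.trans hN₂) hN₂ hDL hD₁)⟩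

theorem stmt19_general (β₁ : ℝ)
    (heq : ∑' k : ℕ+, (((k : ℕ) : ℝ) + 1) ^ 2 * Real.exp (-β₁ * Ek k) = 1) :
    1.5957 <
      β₁ +
        (∑' k : ℕ+, (((k : ℕ) : ℝ) + 1) ^ 2 * Real.log (((k : ℕ) : ℝ) + 1) *
            Real.exp (-β₁ * Ek k)) /
          (∑' k : ℕ+, (((k : ℕ) : ℝ) + 1) ^ 2 *
            Real.sqrt (((k : ℕ) : ℝ) * (((k : ℕ) : ℝ) + 2)) * Real.exp (-β₁ * Ek k)) ∧
    β₁ +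
        (∑' k : ℕ+, (((k : ℕ) : ℝ) + 1) ^ 2 * Real.log (((k : ℕ) : ℝ) + 1) *
            Real.exp (-β₁ * Ek k)) /
          (∑' k : ℕ+, (((k : ℕ) : ℝ) + 1) ^ 2 *
            Real.sqrt (((k : ℕ) : ℝ) * (((k : ℕ) : ℝ) + 2)) * Real.exp (-β₁ * Ek k))
      < 1.5958 := by
  change moment sqWeight β₁ = 1 at heq
  change 1.5957 < β₁ + moment logWeight β₁ / moment areaWeight β₁ ∧
    β₁ + moment logWeight β₁ / moment areaWeight β₁ < 1.5958
  obtain ⟨hlo, hhi⟩ := bracket_of_moment_eq_one heq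
  obtain ⟨hlower, hupper⟩ := add_moment_div_mem_of_bracket hlo.le hhi.le
  constructor
  · calc (1.5957 : ℝ) = ((1.5957 : ℚ) : ℝ) := by norm_num
      _ < _ := Rat.cast_lt.2 lt_betaLower
      _ ≤ _ := hlower
  · calc _ ≤ _ := hupper
      _ < ((1.5958 : ℚ) : ℝ) := Rat.cast_lt.2 betaUpper_lt
      _ = 1.5958 := by norm_num

/-- **Numerical evaluation of the area-law coefficient at coupling `λ = 1`.**
If `β₁ > 0` satisfies `∑_{k≥1} (k+1)² e^{-β₁ E_k} = 1` and
`β = β₁ + (∑ (k+1)² log(k+1) e^{-β₁ E_k}) / (∑ (k+1)² √(k(k+2)) e^{-β₁ E_k})`,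
then `1.5957 < β < 1.5958`. -/
theorem stmt19 (β₁ : ℝ) (hβ₁ : 0 < β₁)
    (heq : ∑' k : ℕ+, (((k : ℕ) : ℝ) + 1) ^ 2 * Real.exp (-β₁ * Ek k) = 1) :
    1.5957 <
      β₁ +
        (∑' k : ℕ+, (((k : ℕ) : ℝ) + 1) ^ 2 * Real.log (((k : ℕ) : ℝ) + 1) *
            Real.exp (-β₁ * Ek k)) /
          (∑' k : ℕ+, (((k : ℕ) : ℝ) + 1) ^ 2 *
            Real.sqrt (((k : ℕ) : ℝ) * (((k : ℕ) : ℝ) + 2)) * Real.exp (-β₁ * Ek k)) ∧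
    β₁ +
        (∑' k : ℕ+, (((k : ℕ) : ℝ) + 1) ^ 2 * Real.log (((k : ℕ) : ℝ) + 1) *
            Real.exp (-β₁ * Ek k)) /
          (∑' k : ℕ+, (((k : ℕ) : ℝ) + 1) ^ 2 *
            Real.sqrt (((k : ℕ) : ℝ) * (((k : ℕ) : ℝ) + 2)) * Real.exp (-β₁ * Ek k))
      < 1.5958 :=
  stmt19_general β₁ heq
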